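/- arXiv:2305.18268 — 2 statements merged into one kernel-verified Lean document; each statement's English description precedes it below -/
import Mathlib

section
/- If P is irreducible, reversible with respect to π, and trace(P) = max(0, (2π_max − 1)/π_max) where π_max = max_x π(x), then no other transition matrix reversible with respect to π can efficiency-dominate P. -/
open Matrix BigOperators Filter

def IsStochastic {n : ℕ} (P : Matrix (Fin n) (Fin n) ℝ) : Prop :=
  (∀ x y, 0 ≤ P x y) ∧ ∀ x, ∑ y, P x y = 1

def IsReversible {n : ℕ} (π : Fin n → ℝ) (P : Matrix (Fin n) (Fin n) ℝ) : Prop :=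
  ∀ x y, π x * P x y = π y * P y x

def MatIrreducible {n : ℕ} (P : Matrix (Fin n) (Fin n) ℝ) : Prop :=
  ∀ x y, ∃ k : ℕ, 0 < (P ^ k) x y

noncomputable def pInner {n : ℕ} (π f g : Fin n → ℝ) : ℝ := ∑ x, f x * g x * π x

noncomputable def autocov {n : ℕ} (π : Fin n → ℝ) (P : Matrix (Fin n) (Fin n) ℝ)
    (f : Fin n → ℝ) (k : ℕ) : ℝ :=
  ∑ x, ∑ y, π x * (f x - ∑ z, π z * f z) * (P ^ k) x y * (f y - ∑ z, π z * f z)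

noncomputable def varN {n : ℕ} (π : Fin n → ℝ) (P : Matrix (Fin n) (Fin n) ℝ)
    (f : Fin n → ℝ) (N : ℕ) : ℝ :=
  ((N : ℝ))⁻¹ * ∑ i ∈ Finset.range N, ∑ j ∈ Finset.range N,
    autocov π P f (max i j - min i j)

def HasAsymptVar {n : ℕ} (π : Fin n → ℝ) (P : Matrix (Fin n) (Fin n) ℝ)
    (f : Fin n → ℝ) (v : ℝ) : Prop :=
  Tendsto (varN π P f) atTop (nhds v)

def EffDom {n : ℕ} (π : Fin n → ℝ) (P Q : Matrix (Fin n) (Fin n) ℝ) : Prop :=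
  ∀ (f : Fin n → ℝ) (vP vQ : ℝ),
    HasAsymptVar π P f vP → HasAsymptVar π Q f vQ → vP ≤ vQ

/-
For a π-reversible chain `R`, conjugation by `diag √π` turns `R` into a symmetric matrix `S_R`,
and the asymptotic variance of `f` is `2 ⟪g, Z_R g⟫ - ⟪g, g⟫`, where `g = √π (f - π f)` and
`Z_R = (1 - S_R + √π √πᵀ)⁻¹`: expand `g` in an eigenbasis of `S_R` and sum the geometric series
of each eigenvalue; irreducibility makes `√π` span the eigenvalue `1`, which `g` avoids.
Both `Z_P` and `Z_Q` fix `√π`, and the vectors `g` fill `√π⊥`, so `Q` dominating `P` gives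
`Z_Q ≤ Z_P` in the Loewner order. Inverting reverses the order, hence `S_Q ≤ S_P`. Thus
`S_P - S_Q` is positive semidefinite with trace `tr P - tr Q ≤ 0`, because every π-reversible
`Q` has `tr Q ≥ max 0 ((2 π_max - 1) / π_max) = tr P`. So `S_P = S_Q` and `Q = P`.
-/

open Finset Topology
open scoped MatrixOrder

theorem sum_range_succ_sum_range_succ_pow_dist (r : ℝ) (N : ℕ) :
    ∑ i ∈ range (N + 1), ∑ j ∈ range (N + 1), r ^ (max i j - min i j) =
      ∑ i ∈ range N, ∑ j ∈ range N, r ^ (max i j - min i j) +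
        2 * ∑ i ∈ range N, r ^ (N - i) + 1 := by
  have hrow : ∀ i ∈ range N, r ^ (max i N - min i N) = r ^ (N - i) := fun i hi => by
    rw [max_eq_right (mem_range.1 hi).le, min_eq_left (mem_range.1 hi).le]
  have hcol : ∀ j ∈ range N, r ^ (max N j - min N j) = r ^ (N - j) := fun j hj => by
    rw [max_eq_left (mem_range.1 hj).le, min_eq_right (mem_range.1 hj).le]
  simp only [sum_range_succ, sum_add_distrib, sum_congr rfl hrow, sum_congr rfl hcol, max_self,
    min_self, Nat.sub_self, pow_zero]
  ring

theorem one_sub_sq_mul_sum_range_sum_range_pow_dist (r : ℝ) (N : ℕ) :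
    (1 - r) ^ 2 * ∑ i ∈ range N, ∑ j ∈ range N, r ^ (max i j - min i j) =
      (1 - r ^ 2) * N - 2 * r * (1 - r ^ N) := by
  induction N with
  | zero => simp
  | succ N ih =>
    have hgeom : (1 - r) * ∑ i ∈ range N, r ^ (N - i) = r * (1 - r ^ N) := by
      rw [← sum_range_reflect, sum_congr rfl fun i hi => by
        rw [show N - (N - 1 - i) = i + 1 by have := mem_range.1 hi; omega]]
      rw [← mul_neg_geom_sum]
      simp only [pow_succ, ← sum_mul]
      ring
    rw [sum_range_succ_sum_range_succ_pow_dist, mul_add, mul_add, ih]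
    push_cast
    linear_combination 2 * (1 - r) * hgeom

theorem tendsto_inv_mul_sum_range_sum_range_pow_dist {r : ℝ} (h₁ : -1 ≤ r) (h₂ : r < 1) :
    Tendsto (fun N : ℕ => (N : ℝ)⁻¹ * ∑ i ∈ range N, ∑ j ∈ range N, r ^ (max i j - min i j))
      atTop (𝓝 ((1 + r) / (1 - r))) := by
  have hr : 1 - r ≠ 0 := by linarith
  have hinv : Tendsto (fun N : ℕ => (N : ℝ)⁻¹) atTop (𝓝 0) :=
    tendsto_inv_atTop_zero.comp tendsto_natCast_atTop_atTop
  have hpow : Tendsto (fun N : ℕ => r ^ N * (N : ℝ)⁻¹) atTop (𝓝 0) := by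
    refine squeeze_zero_norm (fun N => ?_) hinv
    rw [norm_mul, norm_pow, norm_inv, Real.norm_natCast]
    exact mul_le_of_le_one_left (by positivity)
      (pow_le_one₀ (norm_nonneg r) (abs_le.2 ⟨h₁, h₂.le⟩))
  have hlim := (tendsto_const_nhds (x := (1 + r) / (1 - r))).sub
    ((hinv.sub hpow).const_mul (2 * r / (1 - r) ^ 2))
  simp only [sub_zero, mul_zero] at hlim
  refine hlim.congr' ?_
  filter_upwards [eventually_ne_atTop 0] with N hN
  have hclosed := one_sub_sq_mul_sum_range_sum_range_pow_dist r N
  field_simp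
  linear_combination -hclosed

section SymmetricMatrix

variable {ι : Type*} [Fintype ι]

theorem OrthonormalBasis.sum_dotProduct_smul (b : OrthonormalBasis ι ℝ (EuclideanSpace ℝ ι))
    (g : ι → ℝ) : ∑ l, (⇑(b l) ⬝ᵥ g) • ⇑(b l) = g := by
  have h := congrArg WithLp.ofLp (b.sum_repr' (WithLp.toLp 2 g))
  simpa [EuclideanSpace.inner_eq_star_dotProduct, dotProduct_comm] using h

theorem dotProduct_mulVec_eq_sum_of_mulVec_eq_smul
    (b : OrthonormalBasis ι ℝ (EuclideanSpace ℝ ι)) {A : Matrix ι ι ℝ} {a : ι → ℝ}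
    (hA : ∀ l, A *ᵥ ⇑(b l) = a l • ⇑(b l)) (g : ι → ℝ) :
    g ⬝ᵥ (A *ᵥ g) = ∑ l, a l * (⇑(b l) ⬝ᵥ g) ^ 2 := by
  conv_lhs => arg 2; rw [← b.sum_dotProduct_smul g]
  simp only [mulVec_sum, mulVec_smul, hA, smul_smul, dotProduct_sum, dotProduct_smul, smul_eq_mul]
  refine sum_congr rfl fun l _ => ?_
  rw [dotProduct_comm]
  ring

theorem Matrix.IsHermitian.dotProduct_mulVec_comm {S : Matrix ι ι ℝ} (hS : S.IsHermitian)
    (v w : ι → ℝ) : v ⬝ᵥ (S *ᵥ w) = (S *ᵥ v) ⬝ᵥ w := by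
  rw [dotProduct_mulVec, ← mulVec_transpose, ← conjTranspose_eq_transpose_of_trivial, hS.eq]

theorem dotProduct_eq_zero_of_mulVec_eq_smul {S : Matrix ι ι ℝ} (hS : S.IsHermitian)
    {w u : ι → ℝ} {t : ℝ} (hSw : S *ᵥ w = w) (hSu : S *ᵥ u = t • u) (ht : t ≠ 1) :
    w ⬝ᵥ u = 0 := by
  have h := hS.dotProduct_mulVec_comm w u
  rw [hSu, hSw, dotProduct_smul, smul_eq_mul] at h
  by_contra hwu
  exact ht ((mul_eq_right₀ hwu).1 h)

theorem Matrix.le_of_le_on_orthogonal {A B : Matrix ι ι ℝ} (hA : A.IsHermitian)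
    (hB : B.IsHermitian) {w : ι → ℝ} (hw : w ⬝ᵥ w = 1) (hAw : A *ᵥ w = w) (hBw : B *ᵥ w = w)
    (h : ∀ g, w ⬝ᵥ g = 0 → g ⬝ᵥ (A *ᵥ g) ≤ g ⬝ᵥ (B *ᵥ g)) : A ≤ B := by
  have hC : (B - A) *ᵥ w = 0 := by rw [sub_mulVec, hAw, hBw, sub_self]
  refine .of_dotProduct_mulVec_nonneg (hB.sub hA) fun x => ?_
  set g := x - (w ⬝ᵥ x) • w
  have hg : w ⬝ᵥ g = 0 := by simp [g, dotProduct_sub, hw]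
  have hx : x ⬝ᵥ ((B - A) *ᵥ x) = g ⬝ᵥ ((B - A) *ᵥ g) := by
    simp only [g, mulVec_sub, mulVec_smul, smul_zero, sub_zero, sub_dotProduct, smul_dotProduct,
      (hB.sub hA).dotProduct_mulVec_comm w x, hC, zero_dotProduct]
  rw [star_trivial, hx, sub_mulVec, dotProduct_sub, sub_nonneg]
  exact h g hg

variable [DecidableEq ι]

theorem Matrix.PosDef.inv_le_inv_of_le {A B : Matrix ι ι ℝ} (hA : A.PosDef) (hAB : A ≤ B) :
    B⁻¹ ≤ A⁻¹ := by
  have hB : B.PosDef := by simpa using hA.add_posSemidef hAB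
  refine .of_dotProduct_mulVec_nonneg (hA.inv.isHermitian.sub hB.inv.isHermitian) fun x => ?_
  rw [star_trivial, sub_mulVec, dotProduct_sub, sub_nonneg]
  have hAA : A *ᵥ (A⁻¹ *ᵥ x) = x := by
    rw [mulVec_mulVec, mul_nonsing_inv _ hA.det_pos.ne'.isUnit, one_mulVec]
  have hBB : B *ᵥ (B⁻¹ *ᵥ x) = x := by
    rw [mulVec_mulVec, mul_nonsing_inv _ hB.det_pos.ne'.isUnit, one_mulVec]
  set z := B⁻¹ *ᵥ x
  -- Cauchy–Schwarz for `A`, then `A ≤ B`: `(x⬝z)² ≤ (z⬝Az) (x⬝A⁻¹x) ≤ (x⬝z) (x⬝A⁻¹x)`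
  have hcs := LinearMap.BilinForm.apply_mul_apply_le_of_forall_zero_le (toBilin' A)
    (fun v => by simpa [toBilin'_apply'] using hA.posSemidef.dotProduct_mulVec_nonneg v)
    z (A⁻¹ *ᵥ x)
  have hxz : (A⁻¹ *ᵥ x) ⬝ᵥ (A *ᵥ z) = x ⬝ᵥ z := by
    rw [hA.isHermitian.dotProduct_mulVec_comm, hAA]
  simp only [toBilin'_apply', hAA, hxz, dotProduct_comm z x, dotProduct_comm _ x] at hcs
  have hzA : z ⬝ᵥ (A *ᵥ z) ≤ x ⬝ᵥ z := by
    have := hAB.dotProduct_mulVec_nonneg z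
    rwa [star_trivial, sub_mulVec, dotProduct_sub, sub_nonneg, hBB, dotProduct_comm z x] at this
  have ht : 0 ≤ x ⬝ᵥ z := by simpa using hB.inv.posSemidef.dotProduct_mulVec_nonneg x
  have hs : 0 ≤ x ⬝ᵥ (A⁻¹ *ᵥ x) := by simpa using hA.inv.posSemidef.dotProduct_mulVec_nonneg x
  nlinarith

theorem Matrix.inv_mulVec_eq_inv_smul {A : Matrix ι ι ℝ} (hA : IsUnit A) {v : ι → ℝ} {t : ℝ}
    (ht : t ≠ 0) (h : A *ᵥ v = t • v) : A⁻¹ *ᵥ v = t⁻¹ • v := by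
  let := hA.invertible
  exact inv_mulVec_eq_vec (by rw [mulVec_smul, h, smul_smul, inv_mul_cancel₀ ht, one_smul])

theorem Matrix.IsHermitian.pow_mulVec_eigenvectorBasis {S : Matrix ι ι ℝ} (hS : S.IsHermitian)
    (k : ℕ) (l : ι) :
    S ^ k *ᵥ ⇑(hS.eigenvectorBasis l) = hS.eigenvalues l ^ k • ⇑(hS.eigenvectorBasis l) := by
  induction k with
  | zero => simp
  | succ k ih =>
    rw [pow_succ, ← mulVec_mulVec, hS.mulVec_eigenvectorBasis, mulVec_smul, ih, smul_smul,
      pow_succ, mul_comm]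

def shiftedLaplacian (S : Matrix ι ι ℝ) (w : ι → ℝ) : Matrix ι ι ℝ := 1 - S + vecMulVec w w

noncomputable def shiftedEigenvalue (t : ℝ) : ℝ := if t = 1 then 1 else 1 - t

theorem shiftedEigenvalue_pos {t : ℝ} (ht : t ≤ 1) : 0 < shiftedEigenvalue t := by
  unfold shiftedEigenvalue
  split_ifs with h
  · exact one_pos
  · exact sub_pos.2 (lt_of_le_of_ne ht h)

theorem shiftedLaplacian_mulVec {S : Matrix ι ι ℝ} {w : ι → ℝ} (v : ι → ℝ) :
    shiftedLaplacian S w *ᵥ v = v - S *ᵥ v + (w ⬝ᵥ v) • w := by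
  rw [shiftedLaplacian, add_mulVec, sub_mulVec, one_mulVec, vecMulVec_mulVec, op_smul_eq_smul]

theorem shiftedLaplacian_mulVec_self {S : Matrix ι ι ℝ} {w : ι → ℝ} (hw : w ⬝ᵥ w = 1)
    (hSw : S *ᵥ w = w) : shiftedLaplacian S w *ᵥ w = w := by
  rw [shiftedLaplacian_mulVec, hSw, hw, sub_self, zero_add, one_smul]

section SimpleTopEigenvector

variable {S : Matrix ι ι ℝ} (hS : S.IsHermitian) {w : ι → ℝ} (hw : w ⬝ᵥ w = 1)
  (hSw : S *ᵥ w = w) (hfix : ∀ v, S *ᵥ v = v → ∃ c : ℝ, v = c • w)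
include hw hSw hfix

theorem shiftedLaplacian_mulVec_eigenvectorBasis (l : ι) :
    shiftedLaplacian S w *ᵥ ⇑(hS.eigenvectorBasis l) =
      shiftedEigenvalue (hS.eigenvalues l) • ⇑(hS.eigenvectorBasis l) := by
  have hu := hS.mulVec_eigenvectorBasis l
  rw [shiftedLaplacian_mulVec, hu, shiftedEigenvalue]
  split_ifs with h
  · obtain ⟨c, hc⟩ := hfix _ (by rw [hu, h, one_smul])
    rw [h, one_smul, sub_self, zero_add, hc, dotProduct_smul, hw, smul_eq_mul, mul_one]
  · rw [dotProduct_eq_zero_of_mulVec_eq_smul hS hSw hu h, zero_smul, add_zero, sub_smul, one_smul]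

theorem shiftedLaplacian_posDef (hle : ∀ l, hS.eigenvalues l ≤ 1) :
    (shiftedLaplacian S w).PosDef := by
  have hM : (shiftedLaplacian S w).IsHermitian := by
    refine (isHermitian_one.sub hS).add ?_
    rw [IsHermitian, conjTranspose_vecMulVec, star_trivial]
  refine .of_dotProduct_mulVec_pos hM fun v hv => ?_
  rw [star_trivial, dotProduct_mulVec_eq_sum_of_mulVec_eq_smul _
    (shiftedLaplacian_mulVec_eigenvectorBasis hS hw hSw hfix)]
  obtain ⟨l, hl⟩ : ∃ l, ⇑(hS.eigenvectorBasis l) ⬝ᵥ v ≠ 0 := by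
    by_contra! h
    exact hv (by rw [← hS.eigenvectorBasis.sum_dotProduct_smul v]; simp [h])
  exact sum_pos' (fun l _ => mul_nonneg (shiftedEigenvalue_pos (hle l)).le (sq_nonneg _))
    ⟨l, mem_univ l, mul_pos (shiftedEigenvalue_pos (hle l)) (by positivity)⟩

theorem inv_shiftedLaplacian_mulVec_eigenvectorBasis (hle : ∀ l, hS.eigenvalues l ≤ 1) (l : ι) :
    (shiftedLaplacian S w)⁻¹ *ᵥ ⇑(hS.eigenvectorBasis l) =
      (shiftedEigenvalue (hS.eigenvalues l))⁻¹ • ⇑(hS.eigenvectorBasis l) :=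
  Matrix.inv_mulVec_eq_inv_smul (shiftedLaplacian_posDef hS hw hSw hfix hle).isUnit
    (shiftedEigenvalue_pos (hle l)).ne' (shiftedLaplacian_mulVec_eigenvectorBasis hS hw hSw hfix l)

theorem inv_shiftedLaplacian_mulVec_self (hle : ∀ l, hS.eigenvalues l ≤ 1) :
    (shiftedLaplacian S w)⁻¹ *ᵥ w = w := by
  simpa using Matrix.inv_mulVec_eq_inv_smul (shiftedLaplacian_posDef hS hw hSw hfix hle).isUnit
    one_ne_zero (by rw [shiftedLaplacian_mulVec_self hw hSw, one_smul])

theorem tendsto_cesaro_dotProduct_pow_mulVec (hbd : ∀ l, hS.eigenvalues l ∈ Set.Icc (-1) 1)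
    {g : ι → ℝ} (hg : w ⬝ᵥ g = 0) :
    Tendsto (fun N : ℕ => (N : ℝ)⁻¹ * ∑ i ∈ range N, ∑ j ∈ range N,
        g ⬝ᵥ (S ^ (max i j - min i j) *ᵥ g)) atTop
      (𝓝 (2 * (g ⬝ᵥ ((shiftedLaplacian S w)⁻¹ *ᵥ g)) - g ⬝ᵥ g)) := by
  set u := hS.eigenvectorBasis
  have hsum (N : ℕ) : (N : ℝ)⁻¹ * ∑ i ∈ range N, ∑ j ∈ range N,
      g ⬝ᵥ (S ^ (max i j - min i j) *ᵥ g) = ∑ l, (⇑(u l) ⬝ᵥ g) ^ 2 *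
        ((N : ℝ)⁻¹ * ∑ i ∈ range N, ∑ j ∈ range N, hS.eigenvalues l ^ (max i j - min i j)) := by
    simp only [dotProduct_mulVec_eq_sum_of_mulVec_eq_smul u (hS.pow_mulVec_eigenvectorBasis _),
      mul_sum]
    conv_rhs => rw [sum_comm]; arg 2; ext i; rw [sum_comm]
    exact sum_congr rfl fun _ _ => sum_congr rfl fun _ _ => sum_congr rfl fun _ _ => by ring
  have hnorm := dotProduct_mulVec_eq_sum_of_mulVec_eq_smul u (A := 1) (a := fun _ => 1)
    (fun l => by simp) g
  rw [one_mulVec] at hnorm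
  have hlimit : 2 * (g ⬝ᵥ ((shiftedLaplacian S w)⁻¹ *ᵥ g)) - g ⬝ᵥ g =
      ∑ l, (⇑(u l) ⬝ᵥ g) ^ 2 * (2 * (shiftedEigenvalue (hS.eigenvalues l))⁻¹ - 1) := by
    rw [dotProduct_mulVec_eq_sum_of_mulVec_eq_smul u
      (inv_shiftedLaplacian_mulVec_eigenvectorBasis hS hw hSw hfix fun l => (hbd l).2), hnorm,
      mul_sum, ← sum_sub_distrib]
    exact sum_congr rfl fun l _ => by ring
  rw [hlimit]
  simp only [hsum]
  refine tendsto_finsetSum _ fun l _ => ?_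
  by_cases h : hS.eigenvalues l = 1
  · obtain ⟨c, hc⟩ := hfix (u l) (by rw [hS.mulVec_eigenvectorBasis, h, one_smul])
    simp [hc, hg]
  · have hlt := lt_of_le_of_ne (hbd l).2 h
    convert (tendsto_inv_mul_sum_range_sum_range_pow_dist (hbd l).1 hlt).const_mul
      ((⇑(u l) ⬝ᵥ g) ^ 2) using 2
    rw [shiftedEigenvalue, if_neg h]
    field_simp [(sub_pos.2 hlt).ne']
    ring

end SimpleTopEigenvector

end SymmetricMatrix

section MarkovChain

variable {n : ℕ} {π : Fin n → ℝ}

theorem isStochastic_iff_mem_rowStochastic {P : Matrix (Fin n) (Fin n) ℝ} :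
    IsStochastic P ↔ P ∈ rowStochastic ℝ (Fin n) :=
  mem_rowStochastic_iff_sum.symm

theorem IsStochastic.pow {P : Matrix (Fin n) (Fin n) ℝ} (hP : IsStochastic P) (k : ℕ) :
    IsStochastic (P ^ k) :=
  isStochastic_iff_mem_rowStochastic.2 (pow_mem (isStochastic_iff_mem_rowStochastic.1 hP) k)

theorem IsStochastic.mem_Icc_of_mulVec_eq_smul {P : Matrix (Fin n) (Fin n) ℝ}
    (hP : IsStochastic P) {v : Fin n → ℝ} {t : ℝ} (hv : P *ᵥ v = t • v) (hv0 : v ≠ 0) :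
    t ∈ Set.Icc (-1) 1 := by
  obtain ⟨k, hk⟩ := eigenvalue_mem_ball (A := P) (μ := t)
    (Module.End.hasEigenvalue_of_hasEigenvector
      ⟨by rw [Module.End.mem_eigenspace_iff, toLin'_apply, hv], hv0⟩)
  have hrow : ∑ j ∈ univ.erase k, ‖P k j‖ = 1 - P k k := by
    rw [← hP.2 k, ← add_sum_erase _ _ (mem_univ k), add_sub_cancel_left]
    exact sum_congr rfl fun j _ => Real.norm_of_nonneg (hP.1 k j)
  rw [Metric.mem_closedBall, hrow, Real.dist_eq, abs_le] at hk
  constructor <;> linarith [hP.1 k k]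

theorem MatIrreducible.apply_eq_of_mulVec_eq_self {P : Matrix (Fin n) (Fin n) ℝ}
    (hirr : MatIrreducible P) (hP : IsStochastic P) {v : Fin n → ℝ} (hv : P *ᵥ v = v)
    (x y : Fin n) : v x = v y := by
  obtain ⟨x₀, -, hmax⟩ := exists_max_image univ v ⟨x, mem_univ x⟩
  suffices h : ∀ z, v z = v x₀ by rw [h x, h y]
  intro z
  have hvk (k : ℕ) : (P ^ k) *ᵥ v = v := by
    induction k with
    | zero => simp
    | succ k ih => rw [pow_succ, ← mulVec_mulVec, hv, ih]
  obtain ⟨k, hk⟩ := hirr x₀ z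
  have hzero : ∑ u, (P ^ k) x₀ u * (v x₀ - v u) = 0 := by
    have hx₀ := congrFun (hvk k) x₀
    simp only [mulVec, dotProduct] at hx₀
    simp only [mul_sub, sum_sub_distrib, ← sum_mul, (hP.pow k).2, one_mul, hx₀, sub_self]
  have := (sum_eq_zero_iff_of_nonneg fun u _ =>
    mul_nonneg ((hP.pow k).1 x₀ u) (sub_nonneg.2 (hmax u (mem_univ u)))).1 hzero z (mem_univ z)
  linarith [(mul_eq_zero.1 this).resolve_left hk.ne']

theorem IsReversible.two_mul_sub_one_div_le_diag (hπ : ∀ x, 0 < π x) (hπsum : ∑ x, π x = 1)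
    {Q : Matrix (Fin n) (Fin n) ℝ} (hQ : IsStochastic Q) (hrev : IsReversible π Q) (x : Fin n) :
    (2 * π x - 1) / π x ≤ Q x x := by
  -- the flow `π x (1 - Q x x)` out of `x` returns from the other states, of total mass `1 - π x`
  have hflow : π x = ∑ y, π y * Q y x := by
    rw [← mul_one (π x), ← hQ.2 x, mul_sum]
    exact sum_congr rfl fun y _ => hrev x y
  have hstay : π x * (1 - Q x x) ≤ ∑ y, π y * (1 - Q y x) :=
    single_le_sum (f := fun y => π y * (1 - Q y x))
      (fun y _ => mul_nonneg (hπ y).le (sub_nonneg.2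
        (le_one_of_mem_rowStochastic (isStochastic_iff_mem_rowStochastic.1 hQ))))
      (mem_univ x)
  simp only [mul_sub, mul_one, sum_sub_distrib, hπsum, ← hflow] at hstay
  rw [div_le_iff₀ (hπ x)]
  linarith

theorem IsReversible.max_le_trace (hπ : ∀ x, 0 < π x) (hπsum : ∑ x, π x = 1)
    {Q : Matrix (Fin n) (Fin n) ℝ} (hQ : IsStochastic Q) (hrev : IsReversible π Q) {pm : ℝ}
    (hpm : IsGreatest (Set.range π) pm) : max 0 ((2 * pm - 1) / pm) ≤ Q.trace := by
  obtain ⟨⟨x, rfl⟩, -⟩ := hpm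
  exact max_le (sum_nonneg fun y _ => hQ.1 y y)
    ((hrev.two_mul_sub_one_div_le_diag hπ hπsum hQ x).trans
      (single_le_sum (f := fun y => Q y y) (fun y _ => hQ.1 y y) (mem_univ x)))

noncomputable def symmetrization (π : Fin n → ℝ) (R : Matrix (Fin n) (Fin n) ℝ) :
    Matrix (Fin n) (Fin n) ℝ :=
  of fun x y => √(π x) * R x y / √(π y)

theorem symmetrization_mul (hπ : ∀ x, 0 < π x) (R R' : Matrix (Fin n) (Fin n) ℝ) :
    symmetrization π R * symmetrization π R' = symmetrization π (R * R') := by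
  ext x y
  simp only [symmetrization, mul_apply, of_apply, sum_div, mul_sum]
  refine sum_congr rfl fun z _ => ?_
  have := (Real.sqrt_pos.2 (hπ z)).ne'
  field_simp

theorem symmetrization_pow (hπ : ∀ x, 0 < π x) (R : Matrix (Fin n) (Fin n) ℝ) (k : ℕ) :
    symmetrization π R ^ k = symmetrization π (R ^ k) := by
  induction k with
  | zero =>
    ext x y
    by_cases h : x = y
    · subst h
      simp [symmetrization, (Real.sqrt_pos.2 (hπ x)).ne']
    · simp [symmetrization, one_apply, h]
  | succ k ih => rw [pow_succ, ih, symmetrization_mul hπ, pow_succ]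

theorem isHermitian_symmetrization (hπ : ∀ x, 0 < π x) {R : Matrix (Fin n) (Fin n) ℝ}
    (hrev : IsReversible π R) : (symmetrization π R).IsHermitian := by
  ext x y
  have hx := Real.sqrt_pos.2 (hπ x)
  have hy := Real.sqrt_pos.2 (hπ y)
  simp only [conjTranspose_apply, star_trivial, symmetrization, of_apply]
  rw [div_eq_div_iff hx.ne' hy.ne']
  linear_combination Real.mul_self_sqrt (hπ y).le * R y x -
    Real.mul_self_sqrt (hπ x).le * R x y - hrev x y

theorem trace_symmetrization (hπ : ∀ x, 0 < π x) (R : Matrix (Fin n) (Fin n) ℝ) :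
    (symmetrization π R).trace = R.trace :=
  sum_congr rfl fun x _ => by
    have := (Real.sqrt_pos.2 (hπ x)).ne'
    simp only [Matrix.diag, symmetrization, of_apply]
    field_simp

theorem symmetrization_injective (hπ : ∀ x, 0 < π x) :
    Function.Injective (symmetrization π) := by
  intro R R' h
  ext x y
  have hxy := congrFun (congrFun h x) y
  have := (Real.sqrt_pos.2 (hπ x)).ne'
  have := (Real.sqrt_pos.2 (hπ y)).ne'
  simp only [symmetrization, of_apply] at hxy
  field_simp at hxy
  exact hxy

theorem sqrt_dotProduct_sqrt (hπ : ∀ x, 0 < π x) (hπsum : ∑ x, π x = 1) :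
    (Real.sqrt ∘ π) ⬝ᵥ (Real.sqrt ∘ π) = 1 := by
  simp [dotProduct, Real.mul_self_sqrt (hπ _).le, hπsum]

theorem symmetrization_mulVec_sqrt (hπ : ∀ x, 0 < π x) {R : Matrix (Fin n) (Fin n) ℝ}
    (hR : IsStochastic R) : symmetrization π R *ᵥ (Real.sqrt ∘ π) = Real.sqrt ∘ π := by
  funext x
  simp only [mulVec, dotProduct, symmetrization, of_apply, Function.comp_apply]
  conv_rhs => rw [← mul_one √(π x), ← hR.2 x, mul_sum]
  refine sum_congr rfl fun y _ => ?_
  have := (Real.sqrt_pos.2 (hπ y)).ne'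
  field_simp

theorem mulVec_div_sqrt_of_symmetrization (hπ : ∀ x, 0 < π x) {R : Matrix (Fin n) (Fin n) ℝ}
    {u : Fin n → ℝ} {t : ℝ} (h : symmetrization π R *ᵥ u = t • u) :
    R *ᵥ (u / (Real.sqrt ∘ π)) = t • (u / (Real.sqrt ∘ π)) := by
  funext x
  have hx := congrFun h x
  have hsx := (Real.sqrt_pos.2 (hπ x)).ne'
  simp only [mulVec, dotProduct, symmetrization, of_apply, Pi.smul_apply, smul_eq_mul,
    Pi.div_apply, Function.comp_apply] at hx ⊢
  rw [← mul_div_assoc, eq_div_iff hsx, ← hx, sum_mul]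
  exact sum_congr rfl fun y _ => by ring

theorem eigenvalues_symmetrization_mem_Icc (hπ : ∀ x, 0 < π x) {R : Matrix (Fin n) (Fin n) ℝ}
    (hR : IsStochastic R) (hrev : IsReversible π R) (l : Fin n) :
    (isHermitian_symmetrization hπ hrev).eigenvalues l ∈ Set.Icc (-1) 1 := by
  set hS := isHermitian_symmetrization hπ hrev
  refine hR.mem_Icc_of_mulVec_eq_smul
    (mulVec_div_sqrt_of_symmetrization hπ (hS.mulVec_eigenvectorBasis l)) fun h => ?_
  have hu : ⇑(hS.eigenvectorBasis l) = 0 := by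
    funext x
    simpa [(Real.sqrt_pos.2 (hπ x)).ne'] using congrFun h x
  exact hS.eigenvectorBasis.orthonormal.ne_zero l (by simpa using congrArg (WithLp.toLp 2) hu)

theorem eq_smul_sqrt_of_symmetrization_mulVec_eq_self (hπ : ∀ x, 0 < π x)
    {R : Matrix (Fin n) (Fin n) ℝ} (hR : IsStochastic R) (hirr : MatIrreducible R)
    {v : Fin n → ℝ} (hv : symmetrization π R *ᵥ v = v) : ∃ c : ℝ, v = c • (Real.sqrt ∘ π) := by
  have hR1 := mulVec_div_sqrt_of_symmetrization hπ (t := 1) (by rwa [one_smul])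
  rw [one_smul] at hR1
  rcases isEmpty_or_nonempty (Fin n) with _ | ⟨⟨x₀⟩⟩
  · exact ⟨0, Subsingleton.elim _ _⟩
  refine ⟨v x₀ / √(π x₀), funext fun x => ?_⟩
  have := hirr.apply_eq_of_mulVec_eq_self hR hR1 x x₀
  simp only [Pi.div_apply, Function.comp_apply] at this
  rw [Pi.smul_apply, Function.comp_apply, smul_eq_mul, ← this,
    div_mul_cancel₀ _ (Real.sqrt_pos.2 (hπ x)).ne']

noncomputable def weightedCentering (π f : Fin n → ℝ) : Fin n → ℝ :=
  fun x => √(π x) * (f x - ∑ z, π z * f z)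

theorem sqrt_dotProduct_weightedCentering (hπ : ∀ x, 0 < π x) (hπsum : ∑ x, π x = 1)
    (f : Fin n → ℝ) : (Real.sqrt ∘ π) ⬝ᵥ weightedCentering π f = 0 := by
  simp only [dotProduct, weightedCentering, Function.comp_apply, ← mul_assoc,
    Real.mul_self_sqrt (hπ _).le, mul_sub, sum_sub_distrib, ← sum_mul, hπsum, one_mul, sub_self]

theorem weightedCentering_div_sqrt (hπ : ∀ x, 0 < π x) {g : Fin n → ℝ}
    (hg : (Real.sqrt ∘ π) ⬝ᵥ g = 0) : weightedCentering π (g / (Real.sqrt ∘ π)) = g := by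
  have hmean : ∑ z, π z * (g / (Real.sqrt ∘ π)) z = 0 := by
    rw [← hg]
    refine sum_congr rfl fun z _ => ?_
    have := Real.sqrt_pos.2 (hπ z)
    simp only [Pi.div_apply, Function.comp_apply]
    field_simp
    rw [Real.sq_sqrt (hπ z).le, mul_comm]
  funext x
  have := (Real.sqrt_pos.2 (hπ x)).ne'
  rw [weightedCentering, hmean, sub_zero, Pi.div_apply, Function.comp_apply]
  field_simp

theorem autocov_eq_dotProduct_symmetrization_pow (hπ : ∀ x, 0 < π x)
    (R : Matrix (Fin n) (Fin n) ℝ) (f : Fin n → ℝ) (k : ℕ) :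
    autocov π R f k =
      weightedCentering π f ⬝ᵥ (symmetrization π R ^ k *ᵥ weightedCentering π f) := by
  rw [symmetrization_pow hπ]
  simp only [autocov, dotProduct, mulVec, weightedCentering, symmetrization, of_apply, mul_sum]
  refine sum_congr rfl fun x _ => sum_congr rfl fun y _ => ?_
  have := (Real.sqrt_pos.2 (hπ y)).ne'
  field_simp
  rw [Real.sq_sqrt (hπ x).le]
  ring

/-- The Kemeny–Snell fundamental matrix `(1 - R + 𝟙 πᵀ)⁻¹`, conjugated by `diag √π`. -/
noncomputable def fundamentalMatrix (π : Fin n → ℝ) (R : Matrix (Fin n) (Fin n) ℝ) :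
    Matrix (Fin n) (Fin n) ℝ :=
  (shiftedLaplacian (symmetrization π R) (Real.sqrt ∘ π))⁻¹

section Reversible

variable (hπ : ∀ x, 0 < π x) (hπsum : ∑ x, π x = 1) {R : Matrix (Fin n) (Fin n) ℝ}
  (hR : IsStochastic R) (hirr : MatIrreducible R) (hrev : IsReversible π R)
include hπ hπsum hR hirr hrev

theorem posDef_shiftedLaplacian_symmetrization :
    (shiftedLaplacian (symmetrization π R) (Real.sqrt ∘ π)).PosDef :=
  shiftedLaplacian_posDef (isHermitian_symmetrization hπ hrev) (sqrt_dotProduct_sqrt hπ hπsum)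
    (symmetrization_mulVec_sqrt hπ hR)
    (fun _ => eq_smul_sqrt_of_symmetrization_mulVec_eq_self hπ hR hirr)
    (fun l => (eigenvalues_symmetrization_mem_Icc hπ hR hrev l).2)

theorem fundamentalMatrix_mulVec_sqrt :
    fundamentalMatrix π R *ᵥ (Real.sqrt ∘ π) = Real.sqrt ∘ π :=
  inv_shiftedLaplacian_mulVec_self (isHermitian_symmetrization hπ hrev)
    (sqrt_dotProduct_sqrt hπ hπsum) (symmetrization_mulVec_sqrt hπ hR)
    (fun _ => eq_smul_sqrt_of_symmetrization_mulVec_eq_self hπ hR hirr)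
    (fun l => (eigenvalues_symmetrization_mem_Icc hπ hR hrev l).2)

theorem hasAsymptVar_fundamentalMatrix (f : Fin n → ℝ) :
    HasAsymptVar π R f (2 * (weightedCentering π f ⬝ᵥ
      (fundamentalMatrix π R *ᵥ weightedCentering π f)) -
        weightedCentering π f ⬝ᵥ weightedCentering π f) := by
  refine (tendsto_cesaro_dotProduct_pow_mulVec (isHermitian_symmetrization hπ hrev)
    (sqrt_dotProduct_sqrt hπ hπsum) (symmetrization_mulVec_sqrt hπ hR)
    (fun _ => eq_smul_sqrt_of_symmetrization_mulVec_eq_self hπ hR hirr)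
    (eigenvalues_symmetrization_mem_Icc hπ hR hrev)
    (sqrt_dotProduct_weightedCentering hπ hπsum f)).congr fun N => ?_
  simp only [varN, autocov_eq_dotProduct_symmetrization_pow hπ]

end Reversible

section Dominance

variable (hπ : ∀ x, 0 < π x) (hπsum : ∑ x, π x = 1) {P Q : Matrix (Fin n) (Fin n) ℝ}
  (hP : IsStochastic P) (hirrP : MatIrreducible P) (hrevP : IsReversible π P)
  (hQ : IsStochastic Q) (hirrQ : MatIrreducible Q) (hrevQ : IsReversible π Q)
include hπ hπsum hP hirrP hrevP hQ hirrQ hrevQ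

theorem fundamentalMatrix_le_of_effDom (hdom : EffDom π Q P) :
    fundamentalMatrix π Q ≤ fundamentalMatrix π P := by
  refine le_of_le_on_orthogonal
    (posDef_shiftedLaplacian_symmetrization hπ hπsum hQ hirrQ hrevQ).inv.isHermitian
    (posDef_shiftedLaplacian_symmetrization hπ hπsum hP hirrP hrevP).inv.isHermitian
    (sqrt_dotProduct_sqrt hπ hπsum) (fundamentalMatrix_mulVec_sqrt hπ hπsum hQ hirrQ hrevQ)
    (fundamentalMatrix_mulVec_sqrt hπ hπsum hP hirrP hrevP) fun g hg => ?_
  have h := hdom (g / (Real.sqrt ∘ π)) _ _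
    (hasAsymptVar_fundamentalMatrix hπ hπsum hQ hirrQ hrevQ _)
    (hasAsymptVar_fundamentalMatrix hπ hπsum hP hirrP hrevP _)
  rw [weightedCentering_div_sqrt hπ hg] at h
  linarith

theorem symmetrization_le_of_effDom (hdom : EffDom π Q P) :
    symmetrization π Q ≤ symmetrization π P := by
  have hMP := posDef_shiftedLaplacian_symmetrization hπ hπsum hP hirrP hrevP
  have hMQ := posDef_shiftedLaplacian_symmetrization hπ hπsum hQ hirrQ hrevQ
  have hM := hMQ.inv.inv_le_inv_of_le
    (fundamentalMatrix_le_of_effDom hπ hπsum hP hirrP hrevP hQ hirrQ hrevQ hdom)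
  unfold fundamentalMatrix at hM
  rw [nonsing_inv_nonsing_inv _ hMP.det_pos.ne'.isUnit,
    nonsing_inv_nonsing_inv _ hMQ.det_pos.ne'.isUnit, le_iff] at hM
  rw [le_iff]
  convert hM using 1
  simp only [shiftedLaplacian]
  abel

end Dominance

end MarkovChain

theorem stmt17 {n : ℕ} (π : Fin n → ℝ) (P : Matrix (Fin n) (Fin n) ℝ)
    (hπpos : ∀ x, 0 < π x) (hπsum : ∑ x, π x = 1)
    (hP : IsStochastic P) (hirr : MatIrreducible P) (hrev : IsReversible π P)
    (pm : ℝ) (hpm : IsGreatest (Set.range π) pm)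
    (htr : P.trace = max 0 ((2 * pm - 1) / pm)) :
    ∀ Q : Matrix (Fin n) (Fin n) ℝ, IsStochastic Q → MatIrreducible Q →
      IsReversible π Q → Q ≠ P → ¬ EffDom π Q P := by
  intro Q hQ hirrQ hrevQ hne hdom
  have hle := symmetrization_le_of_effDom hπpos hπsum hP hirr hrev hQ hirrQ hrevQ hdom
  have htrace : (symmetrization π P - symmetrization π Q).trace = 0 := by
    refine le_antisymm ?_ hle.trace_nonneg
    rw [trace_sub, trace_symmetrization hπpos, trace_symmetrization hπpos, htr, sub_nonpos]
    exact hrevQ.max_le_trace hπpos hπsum hQ hpm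
  exact hne (symmetrization_injective hπpos (sub_eq_zero.1 (hle.trace_eq_zero_iff.1 htrace))).symm
end

section
/- If Z is an n×n real matrix with z_ii ≥ 0, z_ij ≤ 0 for all i ≠ j, and all row sums equal to zero, then every real eigenvalue of Z is non-negative; consequently, if P Peskun-dominates Q (P(x,y) ≥ Q(x,y) for all x≠y) and both are irreducible and reversible with respect to π, then P efficiency-dominates Q. -/
open Matrix BigOperators Filter

/-!
Gershgorin's theorem gives, for every real eigenvalue `μ` of `Z`, an index `k` with
`|μ - z_kk| ≤ ∑_{j ≠ k} |z_kj| = z_kk`, so `μ ≥ 0`; the same estimate gives `|μ| ≤ 1` for a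
stochastic matrix.

For efficiency dominance, conjugate by `D = diag (√π)`: reversibility makes `S_P = D P D⁻¹`
symmetric, and the autocovariances of `f` become `⟪g, S_P ^ k g⟫` with `g = D (f - π f)`. In an
orthonormal eigenbasis of `S_P`, with coordinates `c_i` of `g` and eigenvalues `λ_i ∈ [-1, 1]`,
`var_N = ∑ c_i² · N⁻¹ ∑_{a, b < N} λ_i ^ |a - b|`; the inner average equals `N` when `λ_i = 1` and
tends to `(1 + λ_i) / (1 - λ_i)` otherwise. So if the asymptotic variance `v` exists, `c_i = 0`
whenever `λ_i = 1`, and `(v + ‖g‖²) / 2 = ∑ c_i² / (1 - λ_i)` is the maximum of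
`y ↦ 2 ⟪g, y⟫ - ⟪y, (1 - S_P) y⟫`. Peskun dominance puts `Q - P` under the first part, so
`S_Q - S_P = S_{Q - P}` is positive semidefinite, the functional for `Q` dominates the one for `P`
pointwise, and `v_P ≤ v_Q`.
-/

open Finset

section Gershgorin

variable {ι : Type*} [Fintype ι] [DecidableEq ι]

lemma exists_abs_sub_diag_le_of_mulVec_eq_smul {A : Matrix ι ι ℝ} {μ : ℝ} {v : ι → ℝ}
    (hv : v ≠ 0) (h : A *ᵥ v = μ • v) :
    ∃ k, |μ - A k k| ≤ ∑ j ∈ univ.erase k, |A k j| :=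
  eigenvalue_mem_ball (Module.End.hasEigenvalue_of_hasEigenvector
    ⟨Module.End.mem_eigenspace_iff.mpr (by rwa [toLin'_apply]), hv⟩)

lemma nonneg_of_mulVec_eq_smul_of_offDiag_nonpos {Z : Matrix ι ι ℝ}
    (ho : ∀ i j, i ≠ j → Z i j ≤ 0) (hs : ∀ i, ∑ j, Z i j = 0)
    {μ : ℝ} {v : ι → ℝ} (hv : v ≠ 0) (h : Z *ᵥ v = μ • v) : 0 ≤ μ := by
  obtain ⟨k, hk⟩ := exists_abs_sub_diag_le_of_mulVec_eq_smul hv h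
  have hoff : ∑ j ∈ univ.erase k, |Z k j| = Z k k := by
    rw [sum_congr rfl fun j hj => abs_of_nonpos (ho k j (ne_of_mem_erase hj).symm),
      sum_neg_distrib, sum_erase_eq_sub (mem_univ k), hs k]
    ring
  linarith [neg_abs_le (μ - Z k k)]

lemma IsStochastic.abs_le_one_of_mulVec_eq_smul {n : ℕ} {P : Matrix (Fin n) (Fin n) ℝ}
    (hP : IsStochastic P) {μ : ℝ} {v : Fin n → ℝ} (hv : v ≠ 0) (h : P *ᵥ v = μ • v) :
    |μ| ≤ 1 := by
  obtain ⟨k, hk⟩ := exists_abs_sub_diag_le_of_mulVec_eq_smul hv h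
  have hoff : ∑ j ∈ univ.erase k, |P k j| = 1 - P k k := by
    rw [sum_congr rfl fun j _ => abs_of_nonneg (hP.1 k j), sum_erase_eq_sub (mem_univ k), hP.2 k]
  calc |μ| ≤ |μ - P k k| + |P k k| := by simpa using abs_add_le (μ - P k k) (P k k)
    _ ≤ 1 := by rw [abs_of_nonneg (hP.1 k k)]; linarith

end Gershgorin

section VarFunctional

variable {ι : Type*} [Fintype ι]

def varFunctional (S : Matrix ι ι ℝ) (g y : ι → ℝ) : ℝ :=
  2 * (g ⬝ᵥ y) - (y ⬝ᵥ y - y ⬝ᵥ (S *ᵥ y))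

lemma varFunctional_le_varFunctional {S T : Matrix ι ι ℝ} (g : ι → ℝ) {y : ι → ℝ}
    (h : 0 ≤ y ⬝ᵥ ((T - S) *ᵥ y)) : varFunctional S g y ≤ varFunctional T g y := by
  rw [sub_mulVec, dotProduct_sub] at h
  unfold varFunctional
  linarith

lemma two_mul_mul_sub_mul_sq_le {t c : ℝ} (ht : 0 ≤ t) (hc : t = 0 → c = 0) (a : ℝ) :
    2 * c * a - t * a ^ 2 ≤ c ^ 2 / t := by
  rcases ht.eq_or_lt with rfl | ht
  · simp [hc rfl]
  · rw [le_div_iff₀ ht]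
    nlinarith [sq_nonneg (t * a - c)]

lemma two_mul_mul_div_sub_mul_sq (t c : ℝ) :
    2 * c * (c / t) - t * (c / t) ^ 2 = c ^ 2 / t := by
  rcases eq_or_ne t 0 with rfl | ht
  · simp
  · field_simp
    ring

end VarFunctional

namespace Matrix.IsHermitian

variable {ι : Type*} [Fintype ι] [DecidableEq ι] {S : Matrix ι ι ℝ} (hS : S.IsHermitian)

lemma eigenvectorBasis_ne_zero (i : ι) : ⇑(hS.eigenvectorBasis i) ≠ 0 := fun h =>
  hS.eigenvectorBasis.orthonormal.ne_zero i (by ext x; simp [h])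

noncomputable def eigenCoord (v : ι → ℝ) (i : ι) : ℝ := ⇑(hS.eigenvectorBasis i) ⬝ᵥ v

lemma inner_eigenvectorBasis (v : ι → ℝ) (i : ι) :
    inner ℝ (hS.eigenvectorBasis i) (WithLp.toLp 2 v) = hS.eigenCoord v i := by
  simp [EuclideanSpace.inner_eq_star_dotProduct, eigenCoord, dotProduct_comm]

lemma dotProduct_eq_sum_eigenCoord (v w : ι → ℝ) :
    v ⬝ᵥ w = ∑ i, hS.eigenCoord v i * hS.eigenCoord w i := by
  have h := hS.eigenvectorBasis.sum_inner_mul_inner (WithLp.toLp 2 v) (WithLp.toLp 2 w)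
  simp_rw [real_inner_comm _ (WithLp.toLp 2 v), inner_eigenvectorBasis] at h
  rw [h]
  simp [EuclideanSpace.inner_eq_star_dotProduct]

lemma eigenCoord_mulVec (w : ι → ℝ) (i : ι) :
    hS.eigenCoord (S *ᵥ w) i = hS.eigenvalues i * hS.eigenCoord w i := by
  have hT : Sᵀ = S := by simpa [conjTranspose_eq_transpose_of_trivial] using hS.eq
  rw [eigenCoord, dotProduct_mulVec, ← mulVec_transpose, hT, mulVec_eigenvectorBasis,
    smul_dotProduct, smul_eq_mul, eigenCoord]

lemma eigenCoord_pow_mulVec (k : ℕ) (w : ι → ℝ) (i : ι) :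
    hS.eigenCoord (S ^ k *ᵥ w) i = hS.eigenvalues i ^ k * hS.eigenCoord w i := by
  induction k with
  | zero => simp
  | succ k ih => rw [pow_succ', ← mulVec_mulVec, eigenCoord_mulVec, ih, pow_succ', mul_assoc]

lemma dotProduct_pow_mulVec (k : ℕ) (v : ι → ℝ) :
    v ⬝ᵥ (S ^ k *ᵥ v) = ∑ i, hS.eigenvalues i ^ k * hS.eigenCoord v i ^ 2 := by
  rw [hS.dotProduct_eq_sum_eigenCoord]
  exact sum_congr rfl fun i _ => by rw [hS.eigenCoord_pow_mulVec]; ring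

lemma exists_eigenCoord_eq (a : ι → ℝ) : ∃ y, hS.eigenCoord y = a := by
  refine ⟨WithLp.ofLp (hS.eigenvectorBasis.repr.symm (WithLp.toLp 2 a)), funext fun i => ?_⟩
  rw [← inner_eigenvectorBasis, WithLp.toLp_ofLp, ← OrthonormalBasis.repr_apply_apply,
    LinearIsometryEquiv.apply_symm_apply]

lemma varFunctional_eq_sum (g y : ι → ℝ) :
    varFunctional S g y = ∑ i, (2 * hS.eigenCoord g i * hS.eigenCoord y i -
      (1 - hS.eigenvalues i) * hS.eigenCoord y i ^ 2) := by
  have hSy := hS.dotProduct_pow_mulVec 1 y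
  rw [pow_one] at hSy
  rw [varFunctional, hS.dotProduct_eq_sum_eigenCoord g, hS.dotProduct_eq_sum_eigenCoord y y, hSy,
    mul_sum, ← sum_sub_distrib, ← sum_sub_distrib]
  exact sum_congr rfl fun i _ => by ring

lemma isGreatest_varFunctional {g : ι → ℝ} (hle : ∀ i, hS.eigenvalues i ≤ 1)
    (hker : ∀ i, hS.eigenvalues i = 1 → hS.eigenCoord g i = 0) :
    IsGreatest (Set.range (varFunctional S g))
      (∑ i, hS.eigenCoord g i ^ 2 / (1 - hS.eigenvalues i)) := by
  constructor
  · -- the maximiser has coordinates `c_i / (1 - λ_i)`, which is `0` where `λ_i = 1` (`x / 0 = 0`)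
    obtain ⟨y, hy⟩ := hS.exists_eigenCoord_eq fun i => hS.eigenCoord g i / (1 - hS.eigenvalues i)
    refine ⟨y, ?_⟩
    simp only [hS.varFunctional_eq_sum, hy, two_mul_mul_div_sub_mul_sq]
  · rintro _ ⟨y, rfl⟩
    rw [hS.varFunctional_eq_sum]
    exact sum_le_sum fun i _ => two_mul_mul_sub_mul_sq_le (sub_nonneg.mpr (hle i))
      (fun h => hker i (by linarith)) _

end Matrix.IsHermitian

section MeanPowDist

noncomputable def meanPowDist (l : ℝ) (N : ℕ) : ℝ :=
  (N : ℝ)⁻¹ * ∑ a ∈ range N, ∑ b ∈ range N, l ^ (max a b - min a b)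

lemma sum_range_succ_pow_dist (l : ℝ) (N : ℕ) :
    ∑ a ∈ range (N + 1), ∑ b ∈ range (N + 1), l ^ (max a b - min a b) =
      ∑ a ∈ range N, ∑ b ∈ range N, l ^ (max a b - min a b) +
        2 * ∑ k ∈ range N, l ^ (k + 1) + 1 := by
  have hreflect : ∑ a ∈ range N, l ^ (N - a) = ∑ k ∈ range N, l ^ (k + 1) := by
    rw [← sum_range_reflect]
    exact sum_congr rfl fun a ha => by have := mem_range.mp ha; congr 1; omega
  have hlastCol : ∀ a ∈ range N, l ^ (max a N - min a N) = l ^ (N - a) := fun a ha => by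
    have := mem_range.mp ha; congr 1; omega
  have hlastRow : ∀ b ∈ range N, l ^ (max N b - min N b) = l ^ (N - b) := fun b hb => by
    have := mem_range.mp hb; congr 1; omega
  simp only [sum_range_succ, sum_add_distrib, sum_congr rfl hlastCol, sum_congr rfl hlastRow,
    hreflect, max_self, min_self, tsub_self, pow_zero]
  ring

lemma sum_range_pow_dist_mul (l : ℝ) (N : ℕ) :
    (1 - l) ^ 2 * ∑ a ∈ range N, ∑ b ∈ range N, l ^ (max a b - min a b) =
      (1 - l ^ 2) * N - 2 * l * (1 - l ^ N) := by
  induction N with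
  | zero => simp
  | succ N ih =>
    have hgeom : (1 - l) * ∑ k ∈ range N, l ^ (k + 1) = l * (1 - l ^ N) := by
      rw [← mul_neg_geom_sum]
      simp_rw [pow_succ', ← mul_sum]
      ring
    rw [sum_range_succ_pow_dist]
    push_cast
    linear_combination ih + 2 * (1 - l) * hgeom

lemma tendsto_meanPowDist {l : ℝ} (hl : |l| ≤ 1) (h1 : l ≠ 1) :
    Tendsto (meanPowDist l) atTop (nhds ((1 + l) / (1 - l))) := by
  have h1l : 1 - l ≠ 0 := sub_ne_zero.mpr h1.symm
  have hbound : ∀ N : ℕ, ‖(1 - l ^ N) / N‖ ≤ 2 / N := fun N => by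
    rw [norm_div, Real.norm_eq_abs, Real.norm_eq_abs, Nat.abs_cast]
    gcongr
    calc |1 - l ^ N| ≤ |1| + |l ^ N| := abs_sub _ _
      _ ≤ 2 := by rw [abs_one, abs_pow]; linarith [pow_le_one₀ (abs_nonneg l) hl (n := N)]
  have hzero : Tendsto (fun N : ℕ => (1 - l ^ N) / N) atTop (nhds 0) :=
    squeeze_zero_norm hbound (tendsto_const_div_atTop_nhds_zero_nat 2)
  have hlim := (tendsto_const_nhds (x := (1 + l) / (1 - l))).sub
    (hzero.const_mul (2 * l / (1 - l) ^ 2))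
  rw [mul_zero, sub_zero] at hlim
  refine hlim.congr' ((eventually_ne_atTop 0).mono fun N hN => ?_)
  have hN' : (N : ℝ) ≠ 0 := Nat.cast_ne_zero.mpr hN
  have h := sum_range_pow_dist_mul l N
  rw [meanPowDist]
  field_simp
  linear_combination -h

lemma meanPowDist_one (N : ℕ) : meanPowDist 1 N = N := by
  by_cases hN : N = 0 <;> simp [meanPowDist, hN]

lemma tendsto_meanPowDist_div {l : ℝ} (hl : |l| ≤ 1) :
    Tendsto (fun N : ℕ => meanPowDist l N / N) atTop (nhds (if l = 1 then 1 else 0)) := by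
  split_ifs with h1
  · subst h1
    refine tendsto_const_nhds.congr' ((eventually_ne_atTop 0).mono fun N hN => ?_)
    simp [meanPowDist_one, Nat.cast_ne_zero.mpr hN]
  · exact (tendsto_meanPowDist hl h1).div_atTop tendsto_natCast_atTop_atTop

end MeanPowDist

section Symmetrize

variable {n : ℕ} {π : Fin n → ℝ}

noncomputable def symmetrize (π : Fin n → ℝ) (P : Matrix (Fin n) (Fin n) ℝ) :
    Matrix (Fin n) (Fin n) ℝ :=
  diagonal (fun x => √(π x)) * P * diagonal (fun x => (√(π x))⁻¹)

lemma symmetrize_apply (P : Matrix (Fin n) (Fin n) ℝ) (x y : Fin n) :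
    symmetrize π P x y = √(π x) * P x y * (√(π y))⁻¹ := by
  simp [symmetrize, diagonal_mul, mul_diagonal]

lemma symmetrize_sub (P Q : Matrix (Fin n) (Fin n) ℝ) :
    symmetrize π (Q - P) = symmetrize π Q - symmetrize π P := by
  simp only [symmetrize, mul_sub, sub_mul]

lemma diagonal_sqrt_mul_diagonal_inv_sqrt (hπ : ∀ x, 0 < π x) :
    diagonal (fun x => √(π x)) * diagonal (fun x => (√(π x))⁻¹) = 1 := by
  simp [diagonal_mul_diagonal, fun x => (Real.sqrt_pos.mpr (hπ x)).ne']

lemma diagonal_inv_sqrt_mul_diagonal_sqrt (hπ : ∀ x, 0 < π x) :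
    diagonal (fun x => (√(π x))⁻¹) * diagonal (fun x => √(π x)) = 1 := by
  simp [diagonal_mul_diagonal, fun x => (Real.sqrt_pos.mpr (hπ x)).ne']

lemma symmetrize_pow (hπ : ∀ x, 0 < π x) (P : Matrix (Fin n) (Fin n) ℝ) (k : ℕ) :
    symmetrize π P ^ k = symmetrize π (P ^ k) :=
  Units.conj_pow ⟨_, _, diagonal_sqrt_mul_diagonal_inv_sqrt hπ,
    diagonal_inv_sqrt_mul_diagonal_sqrt hπ⟩ P k

lemma isHermitian_symmetrize (hπ : ∀ x, 0 < π x) {P : Matrix (Fin n) (Fin n) ℝ}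
    (hrev : IsReversible π P) : (symmetrize π P).IsHermitian := by
  ext x y
  have hx := Real.sqrt_pos.mpr (hπ x)
  have hy := Real.sqrt_pos.mpr (hπ y)
  have h := hrev y x
  rw [← Real.sq_sqrt (hπ x).le, ← Real.sq_sqrt (hπ y).le] at h
  simp only [conjTranspose_apply, star_trivial, symmetrize_apply]
  field_simp
  linear_combination h

lemma IsReversible.sub {P Q : Matrix (Fin n) (Fin n) ℝ} (hP : IsReversible π P)
    (hQ : IsReversible π Q) : IsReversible π (Q - P) := fun x y => by
  simp only [Matrix.sub_apply, mul_sub, hP x y, hQ x y]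

lemma exists_mulVec_eq_smul_of_symmetrize (hπ : ∀ x, 0 < π x) {P : Matrix (Fin n) (Fin n) ℝ}
    {μ : ℝ} {u : Fin n → ℝ} (hu : u ≠ 0) (h : symmetrize π P *ᵥ u = μ • u) :
    ∃ v ≠ 0, P *ᵥ v = μ • v := by
  set D : Matrix (Fin n) (Fin n) ℝ := diagonal fun x => √(π x)
  set E : Matrix (Fin n) (Fin n) ℝ := diagonal fun x => (√(π x))⁻¹
  have hDE : D * E = 1 := diagonal_sqrt_mul_diagonal_inv_sqrt hπ
  have hED : E * D = 1 := diagonal_inv_sqrt_mul_diagonal_sqrt hπ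
  refine ⟨E *ᵥ u, fun h0 => hu ?_, ?_⟩
  · rw [← one_mulVec u, ← hDE, ← mulVec_mulVec, h0, mulVec_zero]
  · calc P *ᵥ (E *ᵥ u) = E *ᵥ (symmetrize π P *ᵥ u) := by
          rw [show symmetrize π P = D * P * E from rfl, mulVec_mulVec, mulVec_mulVec,
            ← mul_assoc, ← mul_assoc, hED, one_mul]
      _ = μ • (E *ᵥ u) := by rw [h, mulVec_smul]

lemma abs_eigenvalues_symmetrize_le_one (hπ : ∀ x, 0 < π x) {P : Matrix (Fin n) (Fin n) ℝ}
    (hP : IsStochastic P) (hS : (symmetrize π P).IsHermitian) (i : Fin n) :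
    |hS.eigenvalues i| ≤ 1 :=
  let ⟨_, hv, h⟩ := exists_mulVec_eq_smul_of_symmetrize hπ (hS.eigenvectorBasis_ne_zero i)
    (hS.mulVec_eigenvectorBasis i)
  hP.abs_le_one_of_mulVec_eq_smul hv h

lemma dotProduct_symmetrize_mulVec_nonneg (hπ : ∀ x, 0 < π x) {Z : Matrix (Fin n) (Fin n) ℝ}
    (hS : (symmetrize π Z).IsHermitian) (ho : ∀ i j, i ≠ j → Z i j ≤ 0)
    (hs : ∀ i, ∑ j, Z i j = 0) (y : Fin n → ℝ) : 0 ≤ y ⬝ᵥ (symmetrize π Z *ᵥ y) := by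
  have hev : 0 ≤ hS.eigenvalues := fun i =>
    let ⟨_, hv, h⟩ := exists_mulVec_eq_smul_of_symmetrize hπ (hS.eigenvectorBasis_ne_zero i)
      (hS.mulVec_eigenvectorBasis i)
    nonneg_of_mulVec_eq_smul_of_offDiag_nonpos ho hs hv h
  simpa using (hS.posSemidef_iff_eigenvalues_nonneg.mpr hev).dotProduct_mulVec_nonneg y

end Symmetrize

section AsymptoticVariance

variable {n : ℕ} {π : Fin n → ℝ} {P : Matrix (Fin n) (Fin n) ℝ}

noncomputable def weightedCentered (π f : Fin n → ℝ) : Fin n → ℝ :=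
  fun x => √(π x) * (f x - ∑ z, π z * f z)

lemma autocov_eq_dotProduct (hπ : ∀ x, 0 < π x) (f : Fin n → ℝ) (k : ℕ) :
    autocov π P f k =
      weightedCentered π f ⬝ᵥ (symmetrize π P ^ k *ᵥ weightedCentered π f) := by
  simp only [symmetrize_pow hπ, autocov, weightedCentered, dotProduct, mulVec, symmetrize_apply,
    mul_sum]
  refine sum_congr rfl fun x _ => sum_congr rfl fun y _ => ?_
  have hx := Real.sq_sqrt (hπ x).le
  have hy := (Real.sqrt_pos.mpr (hπ y)).ne'
  field_simp
  rw [hx]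
  ring

lemma varN_eq_sum (hπ : ∀ x, 0 < π x) (hS : (symmetrize π P).IsHermitian) (f : Fin n → ℝ)
    (N : ℕ) :
    varN π P f N = ∑ i, hS.eigenCoord (weightedCentered π f) i ^ 2 *
      meanPowDist (hS.eigenvalues i) N := by
  simp only [varN, meanPowDist, autocov_eq_dotProduct hπ, hS.dotProduct_pow_mulVec, mul_sum]
  symm
  rw [sum_comm]
  refine sum_congr rfl fun a _ => ?_
  rw [sum_comm]
  exact sum_congr rfl fun b _ => sum_congr rfl fun i _ => by ring

lemma HasAsymptVar.eigenCoord_eq_zero (hπ : ∀ x, 0 < π x) (hP : IsStochastic P)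
    (hS : (symmetrize π P).IsHermitian) {f : Fin n → ℝ} {v : ℝ} (hv : HasAsymptVar π P f v)
    {i : Fin n} (h1 : hS.eigenvalues i = 1) : hS.eigenCoord (weightedCentered π f) i = 0 := by
  set c := hS.eigenCoord (weightedCentered π f)
  have hlim0 : Tendsto (fun N : ℕ => varN π P f N / N) atTop (nhds 0) :=
    Tendsto.div_atTop hv tendsto_natCast_atTop_atTop
  have hlim : Tendsto (fun N : ℕ => varN π P f N / N) atTop
      (nhds (∑ j, c j ^ 2 * if hS.eigenvalues j = 1 then 1 else 0)) := by
    simp only [varN_eq_sum hπ hS, sum_div, mul_div_assoc]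
    exact tendsto_finsetSum _ fun j _ =>
      (tendsto_meanPowDist_div (abs_eigenvalues_symmetrize_le_one hπ hP hS j)).const_mul _
  have hsum := tendsto_nhds_unique hlim hlim0
  rw [sum_eq_zero_iff_of_nonneg fun j _ => mul_nonneg (sq_nonneg _) (by split_ifs <;> norm_num)]
    at hsum
  simpa [h1] using hsum i (mem_univ i)

lemma HasAsymptVar.eq_sum (hπ : ∀ x, 0 < π x) (hP : IsStochastic P)
    (hS : (symmetrize π P).IsHermitian) {f : Fin n → ℝ} {v : ℝ} (hv : HasAsymptVar π P f v) :
    v = ∑ i, hS.eigenCoord (weightedCentered π f) i ^ 2 *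
      ((1 + hS.eigenvalues i) / (1 - hS.eigenvalues i)) := by
  refine tendsto_nhds_unique hv ?_
  simp only [funext (varN_eq_sum hπ hS f)]
  refine tendsto_finsetSum _ fun i _ => ?_
  by_cases h1 : hS.eigenvalues i = 1
  · simp [hv.eigenCoord_eq_zero hπ hP hS h1]
  · exact (tendsto_meanPowDist (abs_eigenvalues_symmetrize_le_one hπ hP hS i) h1).const_mul _

lemma HasAsymptVar.isGreatest_varFunctional (hπ : ∀ x, 0 < π x) (hP : IsStochastic P)
    (hS : (symmetrize π P).IsHermitian) {f : Fin n → ℝ} {v : ℝ} (hv : HasAsymptVar π P f v) :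
    IsGreatest (Set.range (varFunctional (symmetrize π P) (weightedCentered π f)))
      ((v + weightedCentered π f ⬝ᵥ weightedCentered π f) / 2) := by
  have hle : ∀ i, hS.eigenvalues i ≤ 1 := fun i =>
    (abs_le.mp (abs_eigenvalues_symmetrize_le_one hπ hP hS i)).2
  convert hS.isGreatest_varFunctional hle (fun i h1 => hv.eigenCoord_eq_zero hπ hP hS h1) using 1
  rw [hv.eq_sum hπ hP hS, hS.dotProduct_eq_sum_eigenCoord, ← sum_add_distrib, sum_div]
  refine sum_congr rfl fun i _ => ?_
  by_cases h1 : hS.eigenvalues i = 1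
  · simp [hv.eigenCoord_eq_zero hπ hP hS h1]
  · have : 1 - hS.eigenvalues i ≠ 0 := sub_ne_zero.mpr (Ne.symm h1)
    field_simp
    ring

end AsymptoticVariance

theorem stmt18_general {n : ℕ} (π : Fin n → ℝ) (P Q : Matrix (Fin n) (Fin n) ℝ)
    (hπpos : ∀ x, 0 < π x)
    (hP : IsStochastic P) (hQ : IsStochastic Q)
    (hrevP : IsReversible π P) (hrevQ : IsReversible π Q) :
    (∀ Z : Matrix (Fin n) (Fin n) ℝ,
      (∀ i, 0 ≤ Z i i) → (∀ i j, i ≠ j → Z i j ≤ 0) → (∀ i, ∑ j, Z i j = 0) →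
      ∀ (μ : ℝ) (v : Fin n → ℝ), v ≠ 0 → Z.mulVec v = μ • v → 0 ≤ μ) ∧
    ((∀ x y, x ≠ y → Q x y ≤ P x y) → EffDom π P Q) := by
  refine ⟨fun Z _ ho hs μ v hv h => nonneg_of_mulVec_eq_smul_of_offDiag_nonpos ho hs hv h,
    fun hdom f vP vQ hvP hvQ => ?_⟩
  obtain ⟨⟨y, hy⟩, -⟩ := hvP.isGreatest_varFunctional hπpos hP (isHermitian_symmetrize hπpos hrevP)
  have hyQ := (hvQ.isGreatest_varFunctional hπpos hQ (isHermitian_symmetrize hπpos hrevQ)).2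
    ⟨y, rfl⟩
  have hPQ : 0 ≤ y ⬝ᵥ ((symmetrize π Q - symmetrize π P) *ᵥ y) := by
    rw [← symmetrize_sub]
    refine dotProduct_symmetrize_mulVec_nonneg hπpos
      (isHermitian_symmetrize hπpos (hrevP.sub hrevQ))
      (fun x z hxz => sub_nonpos.mpr (hdom x z hxz)) (fun x => ?_) y
    simp only [Matrix.sub_apply, sum_sub_distrib, hP.2 x, hQ.2 x, sub_self]
  have := varFunctional_le_varFunctional (weightedCentered π f) hPQ
  linarith

theorem stmt18 {n : ℕ} (π : Fin n → ℝ) (P Q : Matrix (Fin n) (Fin n) ℝ)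
    (hπpos : ∀ x, 0 < π x) (hπsum : ∑ x, π x = 1)
    (hP : IsStochastic P) (hQ : IsStochastic Q)
    (hirrP : MatIrreducible P) (hirrQ : MatIrreducible Q)
    (hrevP : IsReversible π P) (hrevQ : IsReversible π Q) :
    (∀ Z : Matrix (Fin n) (Fin n) ℝ,
      (∀ i, 0 ≤ Z i i) → (∀ i j, i ≠ j → Z i j ≤ 0) → (∀ i, ∑ j, Z i j = 0) →
      ∀ (μ : ℝ) (v : Fin n → ℝ), v ≠ 0 → Z.mulVec v = μ • v → 0 ≤ μ) ∧
    ((∀ x y, x ≠ y → Q x y ≤ P x y) → EffDom π P Q) :=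
  stmt18_general π P Q hπpos hP hQ hrevP hrevQ
end
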